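/- arXiv:2501.11931 — 3 statements merged into one kernel-verified Lean document; each statement's English description precedes it below -/
import Mathlib

section
/- If a channel W1 is stochastically degraded with respect to W2, i.e. W1(y1|x) = Σ_{y2} W2(y2|x)·W(y1|y2) for some intermediate channel W, then the Bhattacharyya parameter satisfies Z(W2) ≤ Z(W1). -/
open Finset Real

/-- If `W1` is stochastically degraded w.r.t. `W2` through an intermediate
stochastic matrix `W`, then `Z(W2) ≤ Z(W1)`. -/
theorem bhattacharyya_degraded
    {Y1 Y2 : Type*} [Fintype Y1] [Fintype Y2]
    (W1 : Fin 2 → Y1 → ℝ) (W2 : Fin 2 → Y2 → ℝ) (W : Y2 → Y1 → ℝ)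
    (hW1_nonneg : ∀ x y, 0 ≤ W1 x y) (hW1_sum : ∀ x, ∑ y, W1 x y = 1)
    (hW2_nonneg : ∀ x y, 0 ≤ W2 x y) (hW2_sum : ∀ x, ∑ y, W2 x y = 1)
    (hW_nonneg : ∀ y2 y1, 0 ≤ W y2 y1) (hW_sum : ∀ y2, ∑ y1, W y2 y1 = 1)
    (hdeg : ∀ x y1, W1 x y1 = ∑ y2, W2 x y2 * W y2 y1) :
    ∑ y2, Real.sqrt (W2 0 y2 * W2 1 y2) ≤ ∑ y1, Real.sqrt (W1 0 y1 * W1 1 y1) := by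
  have key : ∑ y2, Real.sqrt (W2 0 y2 * W2 1 y2)
      = ∑ y1, ∑ y2, Real.sqrt (W2 0 y2 * W y2 y1) * Real.sqrt (W2 1 y2 * W y2 y1) := by
    rw [Finset.sum_comm]
    refine Finset.sum_congr rfl fun y2 _ => ?_
    have : ∀ y1, Real.sqrt (W2 0 y2 * W y2 y1) * Real.sqrt (W2 1 y2 * W y2 y1)
        = Real.sqrt (W2 0 y2 * W2 1 y2) * W y2 y1 := by
      intro y1
      rw [Real.sqrt_mul (hW2_nonneg 0 y2), Real.sqrt_mul (hW2_nonneg 1 y2),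
        Real.sqrt_mul (hW2_nonneg 0 y2), mul_mul_mul_comm,
        Real.mul_self_sqrt (hW_nonneg y2 y1)]
    simp_rw [this, ← Finset.mul_sum, hW_sum, mul_one]
  rw [key]
  refine Finset.sum_le_sum fun y1 _ => ?_
  calc ∑ y2, Real.sqrt (W2 0 y2 * W y2 y1) * Real.sqrt (W2 1 y2 * W y2 y1)
      ≤ Real.sqrt (∑ y2, W2 0 y2 * W y2 y1) * Real.sqrt (∑ y2, W2 1 y2 * W y2 y1) :=
        Real.sum_sqrt_mul_sqrt_le _ (fun y2 => mul_nonneg (hW2_nonneg 0 y2) (hW_nonneg y2 y1)) (fun y2 => mul_nonneg (hW2_nonneg 1 y2) (hW_nonneg y2 y1))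
    _ = Real.sqrt (W1 0 y1 * W1 1 y1) := by
        rw [← hdeg, ← hdeg, ← Real.sqrt_mul (hW1_nonneg 0 y1)]
end

section
/- For a uniformly distributed binary random variable X and any jointly distributed random variable Y on a finite alphabet, the Bhattacharyya parameter satisfies Z(X|Y)² ≤ H(X|Y), where H is the conditional entropy in bits. -/
open Finset Real

section BhatAux

open Set


/-- Step 1: `log(1+t) - log(1-t) ≤ 2t/(1-t²)` on `[0,1)`. -/
lemma step1 : ∀ t ∈ Ico (0:ℝ) 1, Real.log (1+t) - Real.log (1-t) ≤ 2*t/(1-t^2) := by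
  set ψ : ℝ → ℝ := fun t => 2*t/(1-t^2) - (Real.log (1+t) - Real.log (1-t)) with hψ
  have hd : ∀ t ∈ Ico (0:ℝ) 1, HasDerivAt ψ (4*t^2/(1-t^2)^2) t := by
    intro t ht
    have h1p : (0:ℝ) < 1 + t := by linarith [ht.1]
    have h1m : (0:ℝ) < 1 - t := by linarith [ht.2]
    have hden : (1:ℝ) - t^2 ≠ 0 := by nlinarith
    have hA : HasDerivAt (fun t:ℝ => 2*t/(1-t^2)) ((2*(1-t^2) - 2*t*(-(2*t)))/(1-t^2)^2) t := by
      exact (((hasDerivAt_id t).const_mul 2).div (((hasDerivAt_id t).pow 2).const_sub 1) hden).congr_deriv (by simp only [Pi.pow_apply, id_eq]; ring_nf)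
    have hB : HasDerivAt (fun t:ℝ => Real.log (1+t)) (1/(1+t)) t := by
      simpa [Function.comp_def] using (Real.hasDerivAt_log h1p.ne').comp t ((hasDerivAt_id t).const_add 1)
    have hC : HasDerivAt (fun t:ℝ => Real.log (1-t)) (-(1/(1-t))) t := by
      have := (Real.hasDerivAt_log h1m.ne').comp t ((hasDerivAt_id t).const_sub 1)
      simpa [Function.comp_def] using this
    have := hA.sub (hB.sub hC)
    refine this.congr_deriv ?_
    field_simp
    ring
  have hmono : MonotoneOn ψ (Ico 0 1) := by
    apply monotoneOn_of_deriv_nonneg (convex_Ico 0 1)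
    · exact fun t ht => (hd t ht).continuousAt.continuousWithinAt
    · intro t ht
      rw [interior_Ico] at ht
      exact ((hd t (Ioo_subset_Ico_self ht)).differentiableAt).differentiableWithinAt
    · intro t ht
      rw [interior_Ico] at ht
      rw [(hd t (Ioo_subset_Ico_self ht)).deriv]
      positivity
  intro t ht
  have h0 : ψ 0 ≤ ψ t := hmono (by constructor <;> norm_num) ht ht.1
  have : ψ 0 = 0 := by simp [hψ]
  simp only [hψ] at h0 ⊢
  linarith


noncomputable def gg (t : ℝ) : ℝ := (1+t)*Real.log (1+t) + (1-t)*Real.log (1-t)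

lemma gg_cont : Continuous gg := by
  have : gg = fun t => -Real.negMulLog (1+t) + -Real.negMulLog (1-t) := by
    funext t; simp [gg, Real.negMulLog]; ring
  rw [this]
  fun_prop

lemma gg_hasDeriv {t : ℝ} (h1p : (0:ℝ) < 1+t) (h1m : (0:ℝ) < 1-t) :
    HasDerivAt gg (Real.log (1+t) - Real.log (1-t)) t := by
  have hB : HasDerivAt (fun t:ℝ => Real.log (1+t)) (1/(1+t)) t := by
    simpa [Function.comp_def] using (Real.hasDerivAt_log h1p.ne').comp t ((hasDerivAt_id t).const_add 1)
  have hC : HasDerivAt (fun t:ℝ => Real.log (1-t)) (-(1/(1-t))) t := by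
    simpa [Function.comp_def] using (Real.hasDerivAt_log h1m.ne').comp t ((hasDerivAt_id t).const_sub 1)
  have h1 : HasDerivAt (fun t:ℝ => (1+t)*Real.log (1+t))
      (1*Real.log (1+t) + (1+t)*(1/(1+t))) t :=
    ((hasDerivAt_id t).const_add 1).mul hB
  have h2 : HasDerivAt (fun t:ℝ => (1-t)*Real.log (1-t))
      ((-1)*Real.log (1-t) + (1-t)*(-(1/(1-t)))) t :=
    ((hasDerivAt_id t).const_sub 1).mul hC
  have := h1.add h2
  refine this.congr_deriv ?_
  field_simp
  ring

/-- Step 2: `2·g(t) ≤ t·g'(t)` on `[0,1)`. -/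
lemma step2 : ∀ t ∈ Ico (0:ℝ) 1, 2 * gg t ≤ t * (Real.log (1+t) - Real.log (1-t)) := by
  set ρ : ℝ → ℝ := fun t => t * (Real.log (1+t) - Real.log (1-t)) - 2 * gg t with hρ
  have hd : ∀ t ∈ Ico (0:ℝ) 1,
      HasDerivAt ρ (2*t/(1-t^2) - (Real.log (1+t) - Real.log (1-t))) t := by
    intro t ht
    have h1p : (0:ℝ) < 1 + t := by linarith [ht.1]
    have h1m : (0:ℝ) < 1 - t := by linarith [ht.2]
    have hB : HasDerivAt (fun t:ℝ => Real.log (1+t)) (1/(1+t)) t := by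
      simpa [Function.comp_def] using (Real.hasDerivAt_log h1p.ne').comp t ((hasDerivAt_id t).const_add 1)
    have hC : HasDerivAt (fun t:ℝ => Real.log (1-t)) (-(1/(1-t))) t := by
      simpa [Function.comp_def] using (Real.hasDerivAt_log h1m.ne').comp t ((hasDerivAt_id t).const_sub 1)
    have h1 : HasDerivAt (fun t:ℝ => t * (Real.log (1+t) - Real.log (1-t)))
        (1 * (Real.log (1+t) - Real.log (1-t)) + t * (1/(1+t) - -(1/(1-t)))) t :=
      (hasDerivAt_id t).mul (hB.sub hC)
    have := h1.sub ((gg_hasDeriv h1p h1m).const_mul 2)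
    refine this.congr_deriv ?_
    have hne1 : (1:ℝ) + t ≠ 0 := h1p.ne'
    have hne2 : (1:ℝ) - t ≠ 0 := h1m.ne'
    have hden : (1:ℝ) - t^2 ≠ 0 := by nlinarith
    field_simp
    ring
  have hmono : MonotoneOn ρ (Ico 0 1) := by
    apply monotoneOn_of_deriv_nonneg (convex_Ico 0 1)
    · exact fun t ht => (hd t ht).continuousAt.continuousWithinAt
    · intro t ht
      rw [interior_Ico] at ht
      exact ((hd t (Ioo_subset_Ico_self ht)).differentiableAt).differentiableWithinAt
    · intro t ht
      rw [interior_Ico] at ht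
      rw [(hd t (Ioo_subset_Ico_self ht)).deriv]
      have := step1 t (Ioo_subset_Ico_self ht)
      linarith
  intro t ht
  have h0 : ρ 0 ≤ ρ t := hmono (by constructor <;> norm_num) ht ht.1
  have hz : ρ 0 = 0 := by simp [hρ, gg]
  rw [hz] at h0
  simp only [hρ] at h0
  linarith

/-- Step 3: `g(t) ≤ 2·log 2·t²` on `[0,1]`. -/
lemma step3 : ∀ t ∈ Icc (0:ℝ) 1, gg t ≤ 2 * Real.log 2 * t^2 := by
  set H : ℝ → ℝ := fun t => gg t / t^2 with hH
  have hd : ∀ t ∈ Ioo (0:ℝ) 1,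
      HasDerivAt H ((t * (Real.log (1+t) - Real.log (1-t)) - 2 * gg t)/t^3) t := by
    intro t ht
    have h1p : (0:ℝ) < 1 + t := by linarith [ht.1]
    have h1m : (0:ℝ) < 1 - t := by linarith [ht.2]
    have ht0 : t ≠ 0 := ht.1.ne'
    have hsq : t^2 ≠ 0 := pow_ne_zero 2 ht0
    have := (gg_hasDeriv h1p h1m).div ((hasDerivAt_id t).pow 2) hsq
    refine this.congr_deriv ?_
    simp only [Pi.pow_apply, id_eq]
    field_simp
    ring
  have hmono : MonotoneOn H (Ioc 0 1) := by
    apply monotoneOn_of_deriv_nonneg (convex_Ioc 0 1)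
    · apply ContinuousOn.div gg_cont.continuousOn (by fun_prop)
      intro t ht
      exact pow_ne_zero 2 ht.1.ne'
    · intro t ht
      rw [interior_Ioc] at ht
      exact ((hd t ht).differentiableAt).differentiableWithinAt
    · intro t ht
      rw [interior_Ioc] at ht
      rw [(hd t ht).deriv]
      have h2 := step2 t ⟨ht.1.le, ht.2⟩
      have : (0:ℝ) < t^3 := pow_pos ht.1 3
      apply div_nonneg (by linarith) this.le
  intro t ht
  rcases eq_or_lt_of_le ht.1 with h0 | h0
  · simp [gg, ← h0]
  · have h1 : H t ≤ H 1 := hmono ⟨h0, ht.2⟩ (by constructor <;> norm_num) ht.2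
    have hH1 : H 1 = 2 * Real.log 2 := by
      simp [hH, gg]
      norm_num
    rw [hH1] at h1
    simp only [hH] at h1
    have hsq : (0:ℝ) < t^2 := by positivity
    calc gg t = (gg t / t^2) * t^2 := by field_simp
    _ ≤ (2*Real.log 2) * t^2 := by apply mul_le_mul_of_nonneg_right h1 hsq.le


/-- Binary entropy lower bound, half case. -/
lemma ent_half {p : ℝ} (h0 : 0 ≤ p) (h1 : p ≤ 1/2) :
    4 * Real.log 2 * (p * (1-p)) ≤ Real.negMulLog p + Real.negMulLog (1-p) := by
  rcases eq_or_lt_of_le h0 with h | h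
  · simp [← h]
  · set t := 1 - 2*p with hT
    have ht : t ∈ Icc (0:ℝ) 1 := ⟨by simp only [hT]; linarith, by simp only [hT]; linarith⟩
    have key := step3 t ht
    simp only [gg] at key
    have h1p : (1:ℝ) + t = 2*(1-p) := by simp only [hT]; ring
    have h1m : (1:ℝ) - t = 2*p := by simp only [hT]; ring
    have hp1 : (0:ℝ) < 1 - p := by linarith
    have hlp : Real.log (1+t) = Real.log 2 + Real.log (1-p) := by
      rw [h1p, Real.log_mul (by norm_num) hp1.ne']
    have hlm : Real.log (1-t) = Real.log 2 + Real.log p := by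
      rw [h1m, Real.log_mul (by norm_num) h.ne']
    have ht2 : t^2 = 1 - 4*p + 4*p^2 := by rw [hT]; ring
    rw [hlp, hlm, h1p, h1m, ht2] at key
    simp only [Real.negMulLog]
    nlinarith [key]

lemma ent_ge {p : ℝ} (h0 : 0 ≤ p) (h1 : p ≤ 1) :
    4 * Real.log 2 * (p * (1-p)) ≤ Real.negMulLog p + Real.negMulLog (1-p) := by
  rcases le_total p (1/2) with h | h
  · exact ent_half h0 h
  · have := ent_half (p := 1-p) (by linarith) (by linarith)
    have e : 1 - (1-p) = p := by ring
    rw [e] at this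
    linarith [this]

/-- Pointwise: `4ab/(a+b) ≤ -(a·logb2(a/(a+b)) + b·logb2(b/(a+b)))`. -/
lemma bhat_pointwise {a b : ℝ} (ha : 0 ≤ a) (hb : 0 ≤ b) :
    4 * (a*b/(a+b)) ≤ -(a * Real.logb 2 (a/(a+b)) + b * Real.logb 2 (b/(a+b))) := by
  rcases eq_or_lt_of_le (by linarith : (0:ℝ) ≤ a + b) with hq | hq
  · have ha0 : a = 0 := by linarith
    have hb0 : b = 0 := by linarith
    simp [ha0, hb0]
  · set q := a + b with hqdef
    set p := a / q with hpdef
    have hl2 : (0:ℝ) < Real.log 2 := Real.log_pos (by norm_num)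
    have hp0 : 0 ≤ p := div_nonneg ha hq.le
    have hp1 : p ≤ 1 := by rw [hpdef]; rw [div_le_one hq]; linarith
    have hbq : b / q = 1 - p := by
      rw [hpdef]; field_simp; simp only [hqdef]; ring
    have haq : a = q * p := by rw [hpdef]; field_simp
    have hbq' : b = q * (1-p) := by rw [← hbq]; field_simp
    have hent := ent_ge hp0 hp1
    have hE : -(a * Real.logb 2 (a/q) + b * Real.logb 2 (b/q))
        = q * (Real.negMulLog p + Real.negMulLog (1-p)) / Real.log 2 := by
      rw [← hpdef, hbq, Real.logb, Real.logb, Real.negMulLog, Real.negMulLog]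
      rw [haq, hbq']
      field_simp
      ring
    rw [hE]
    have hab : a * b / q = q * (p * (1-p)) := by
      rw [haq]; nth_rewrite 1 [hbq']; field_simp
    rw [hab, le_div_iff₀ hl2]
    calc 4 * (q * (p*(1-p))) * Real.log 2 = q * (4 * Real.log 2 * (p * (1-p))) := by ring
    _ ≤ q * (Real.negMulLog p + Real.negMulLog (1-p)) := by
        apply mul_le_mul_of_nonneg_left hent hq.le

end BhatAux

/-- For uniform binary `X` jointly distributed with finite `Y`,
`Z(X|Y)² ≤ H(X|Y)` where `Z(X|Y) = 2 ∑ y, √(P(0,y) P(1,y))` and `H(X|Y)` is the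
conditional entropy in bits. -/
theorem bhattacharyya_sq_le_cond_entropy
    {Y : Type*} [Fintype Y] (P : Fin 2 → Y → ℝ)
    (hP_nonneg : ∀ x y, 0 ≤ P x y)
    (hP_sum : ∑ x, ∑ y, P x y = 1)
    (hX_unif : ∀ x, ∑ y, P x y = 1 / 2) :
    (2 * ∑ y, Real.sqrt (P 0 y * P 1 y)) ^ 2
      ≤ -∑ x, ∑ y, P x y * Real.logb 2 (P x y / (P 0 y + P 1 y)) := by
  have hq1 : ∑ y, (P 0 y + P 1 y) = 1 := by
    rw [Finset.sum_add_distrib, hX_unif 0, hX_unif 1]; norm_num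
  -- Cauchy–Schwarz
  have hCS : (∑ y, Real.sqrt (P 0 y * P 1 y)) ^ 2
      ≤ ∑ y, P 0 y * P 1 y / (P 0 y + P 1 y) := by
    have := Finset.sum_sq_le_sum_mul_sum_of_sq_eq_mul Finset.univ
      (r := fun y => Real.sqrt (P 0 y * P 1 y))
      (f := fun y => P 0 y + P 1 y)
      (g := fun y => P 0 y * P 1 y / (P 0 y + P 1 y))
      (fun y _ => add_nonneg (hP_nonneg 0 y) (hP_nonneg 1 y))
      (fun y _ => div_nonneg (mul_nonneg (hP_nonneg 0 y) (hP_nonneg 1 y))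
        (add_nonneg (hP_nonneg 0 y) (hP_nonneg 1 y)))
      (fun y _ => ?_)
    · rw [hq1, one_mul] at this; exact this
    · rw [Real.sq_sqrt (mul_nonneg (hP_nonneg 0 y) (hP_nonneg 1 y))]
      rcases eq_or_lt_of_le (add_nonneg (hP_nonneg 0 y) (hP_nonneg 1 y)) with h | h
      · have h0 : P 0 y = 0 := by linarith [hP_nonneg 0 y, hP_nonneg 1 y]
        simp [h0]
      · field_simp
  have hRHS : -∑ x, ∑ y, P x y * Real.logb 2 (P x y / (P 0 y + P 1 y))
      = ∑ y, -(P 0 y * Real.logb 2 (P 0 y / (P 0 y + P 1 y))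
             + P 1 y * Real.logb 2 (P 1 y / (P 0 y + P 1 y))) := by
    rw [Fin.sum_univ_two, ← Finset.sum_add_distrib, ← Finset.sum_neg_distrib]
  rw [hRHS]
  calc (2 * ∑ y, Real.sqrt (P 0 y * P 1 y)) ^ 2
      = 4 * (∑ y, Real.sqrt (P 0 y * P 1 y)) ^ 2 := by ring
    _ ≤ 4 * ∑ y, P 0 y * P 1 y / (P 0 y + P 1 y) := by linarith
    _ = ∑ y, 4 * (P 0 y * P 1 y / (P 0 y + P 1 y)) := by rw [Finset.mul_sum]
    _ ≤ _ := Finset.sum_le_sum fun y _ => bhat_pointwise (hP_nonneg 0 y) (hP_nonneg 1 y)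
end

section
/- If Q(uⁱ|u^{1:i−1},y) = P(uⁱ|u^{1:i−1},y) for all i in a subset A ⊆ {1,…,N} and all (u,y), and P(y)=Q(y), then the total variation distance between the joint distributions P and Q of (U^{1:N},Y) is bounded by the sum over i ∉ A of the expected (under P) total variation between the conditional distributions of Uⁱ given (U^{1:i−1},Y) under P and Q. -/
open Finset Real

private def jointP {U Y : Type*} [Fintype U] (N : ℕ) (pY : Y → ℝ)
    (pC : (i : Fin N) → (Fin i → U) → Y → U → ℝ) (y : Y) (u : Fin N → U) : ℝ :=
  pY y * ∏ i, pC i (fun k => u (Fin.castLE i.2.le k)) y (u i)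

private def termT {U Y : Type*} [Fintype U] [Fintype Y] (N : ℕ) (pY : Y → ℝ)
    (pC qC : (i : Fin N) → (Fin i → U) → Y → U → ℝ) (i : Fin N) : ℝ :=
  ∑ y, ∑ v : Fin i → U,
    jointP i pY (fun j => pC (Fin.castLE i.2.le j)) y v * ∑ w : U, |qC i v y w - pC i v y w|

private lemma tv_aux {U Y : Type*} [Fintype U] [Fintype Y] :
    ∀ (N : ℕ) (pY : Y → ℝ)
      (pC qC : (i : Fin N) → (Fin i → U) → Y → U → ℝ) (A : Finset (Fin N)),
      (∀ y, 0 ≤ pY y) →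
      (∀ i v y w, 0 ≤ pC i v y w) →
      (∀ i v y, ∑ w, pC i v y w = 1) →
      (∀ i v y w, 0 ≤ qC i v y w) →
      (∀ i v y, ∑ w, qC i v y w = 1) →
      (∀ i ∈ A, ∀ v y w, qC i v y w = pC i v y w) →
      ∑ y, ∑ u : Fin N → U, |jointP N pY qC y u - jointP N pY pC y u|
        ≤ ∑ i ∈ Aᶜ, termT N pY pC qC i := by
  intro N
  induction N with
  | zero =>
    intro pY pC qC A _ _ _ _ _ _
    rw [Subsingleton.elim Aᶜ (∅ : Finset (Fin 0)), Finset.sum_empty]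
    simp [jointP]
  | succ N IH =>
    intro pY pC qC A hY hp hps hq hqs hag
    classical
    set L : Fin (N + 1) := Fin.last N with hL
    let pC' : (j : Fin N) → (Fin j → U) → Y → U → ℝ := fun j => pC j.castSucc
    let qC' : (j : Fin N) → (Fin j → U) → Y → U → ℝ := fun j => qC j.castSucc
    let A' : Finset (Fin N) := Finset.univ.filter (fun j => j.castSucc ∈ A)
    -- snoc prefix lemma
    have hpre : ∀ (v : Fin N → U) (w : U) (m : ℕ) (hm : m ≤ N) (h : m ≤ N + 1) (k : Fin m),
        Fin.snoc (α := fun _ => U) v w (Fin.castLE h k) = v (Fin.castLE hm k) := by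
      intro v w m hm h k
      have : (Fin.castLE h k : Fin (N + 1)) = Fin.castSucc (Fin.castLE hm k) := rfl
      rw [this, Fin.snoc_castSucc]
    -- sum over pi type splits
    have hsum : ∀ f : (Fin (N + 1) → U) → ℝ,
        ∑ u, f u = ∑ v : Fin N → U, ∑ w : U, f (Fin.snoc v w) := by
      intro f
      rw [← (Fin.snocEquiv (fun _ => U)).sum_comp f, Fintype.sum_prod_type]
      rw [Finset.sum_comm]
      simp [Fin.snocEquiv]
    -- products split
    have hprod : ∀ (rC : (i : Fin (N + 1)) → (Fin i → U) → Y → U → ℝ) (y : Y)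
        (v : Fin N → U) (w : U),
        jointP (N + 1) pY rC y (Fin.snoc v w)
          = jointP N pY (fun j => rC j.castSucc) y v * rC L v y w := by
      intro rC y v w
      simp only [jointP]
      rw [Fin.prod_univ_castSucc, ← mul_assoc]
      congr 1
      · congr 1
        refine Finset.prod_congr rfl fun j _ => ?_
        have h1 : (fun k : Fin ((j.castSucc : Fin (N+1)) : ℕ) =>
              Fin.snoc (α := fun _ => U) v w (Fin.castLE (j.castSucc).2.le k))
            = (fun k : Fin (j : ℕ) => v (Fin.castLE j.2.le k)) :=
          funext fun k => hpre v w _ j.2.le _ k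
        rw [show Fin.snoc (α := fun _ => U) v w j.castSucc = v j by simp]
        exact congrFun (congrFun (congrArg _ h1) y) (v j)
      · have h2 : (fun k : Fin ((L : Fin (N+1)) : ℕ) =>
              Fin.snoc (α := fun _ => U) v w (Fin.castLE L.2.le k)) = v :=
          funext fun k => hpre v w N le_rfl L.2.le k
        rw [show Fin.snoc (α := fun _ => U) v w L = w by rw [hL]; simp, h2]
    -- nonneg of jointP
    have hApos : ∀ y v, 0 ≤ jointP N pY pC' y v := by
      intro y v
      exact mul_nonneg (hY y) (Finset.prod_nonneg fun j _ => hp _ _ _ _)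
    -- pointwise key bound
    have key : ∀ y v, ∑ w, |jointP N pY qC' y v * qC L v y w - jointP N pY pC' y v * pC L v y w|
        ≤ |jointP N pY qC' y v - jointP N pY pC' y v|
          + jointP N pY pC' y v * ∑ w, |qC L v y w - pC L v y w| := by
      intro y v
      have h1 : ∀ w, |jointP N pY qC' y v * qC L v y w - jointP N pY pC' y v * pC L v y w|
          ≤ |jointP N pY qC' y v - jointP N pY pC' y v| * qC L v y w
            + jointP N pY pC' y v * |qC L v y w - pC L v y w| := by
        intro w
        have heq : jointP N pY qC' y v * qC L v y w - jointP N pY pC' y v * pC L v y w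
            = (jointP N pY qC' y v - jointP N pY pC' y v) * qC L v y w
              + jointP N pY pC' y v * (qC L v y w - pC L v y w) := by ring
        rw [heq]
        refine (abs_add_le _ _).trans ?_
        rw [abs_mul, abs_mul, abs_of_nonneg (hq L v y w), abs_of_nonneg (hApos y v)]
      calc ∑ w, |jointP N pY qC' y v * qC L v y w - jointP N pY pC' y v * pC L v y w|
          ≤ ∑ w, (|jointP N pY qC' y v - jointP N pY pC' y v| * qC L v y w
              + jointP N pY pC' y v * |qC L v y w - pC L v y w|) :=
            Finset.sum_le_sum fun w _ => h1 w
        _ = |jointP N pY qC' y v - jointP N pY pC' y v|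
              + jointP N pY pC' y v * ∑ w, |qC L v y w - pC L v y w| := by
            rw [Finset.sum_add_distrib, ← Finset.mul_sum, ← Finset.mul_sum, hqs L v y, mul_one]
    -- IH application
    have hag' : ∀ j ∈ A', ∀ v y w, qC' j v y w = pC' j v y w := by
      intro j hj v y w
      exact hag j.castSucc (by simpa [A'] using hj) v y w
    have hIH := IH pY pC' qC' A' hY (fun i v y w => hp _ _ _ _) (fun i v y => hps _ _ _)
      (fun i v y w => hq _ _ _ _) (fun i v y => hqs _ _ _) hag'
    -- termT relations
    have hT : ∀ j : Fin N, termT (N + 1) pY pC qC j.castSucc = termT N pY pC' qC' j :=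
      fun j => rfl
    have hTL : termT (N + 1) pY pC qC L
        = ∑ y, ∑ v : Fin N → U, jointP N pY pC' y v * ∑ w, |qC L v y w - pC L v y w| := rfl
    -- splitting RHS
    have hsplit : ∑ i ∈ Aᶜ, termT (N + 1) pY pC qC i
        = (∑ j ∈ A'ᶜ, termT N pY pC' qC' j)
          + (if L ∈ A then 0 else termT (N + 1) pY pC qC L) := by
      have e1 : ∑ i ∈ Aᶜ, termT (N + 1) pY pC qC i
          = ∑ i : Fin (N + 1), if i ∈ Aᶜ then termT (N + 1) pY pC qC i else 0 := by
        rw [Finset.sum_ite_mem, Finset.univ_inter]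
      rw [e1, Fin.sum_univ_castSucc]
      congr 1
      · rw [show (∑ j : Fin N, if (j.castSucc : Fin (N+1)) ∈ Aᶜ
            then termT (N + 1) pY pC qC j.castSucc else 0)
            = ∑ j : Fin N, if j ∈ A'ᶜ then termT N pY pC' qC' j else 0 from
            Finset.sum_congr rfl fun j _ => by
              simp only [hT j, Finset.mem_compl, A', Finset.mem_filter, Finset.mem_univ,
                true_and]]
        rw [Finset.sum_ite_mem, Finset.univ_inter]
      · simp only [Finset.mem_compl]
        by_cases h : L ∈ A <;> simp [h, ← hL]
    -- if L ∈ A the last part vanishes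
    have hlast : (∑ y, ∑ v : Fin N → U, jointP N pY pC' y v * ∑ w, |qC L v y w - pC L v y w|)
        ≤ (if L ∈ A then 0 else termT (N + 1) pY pC qC L) := by
      by_cases h : L ∈ A
      · simp only [h, if_true]
        have : ∀ (v : Fin N → U) (y : Y) (w : U), qC L v y w - pC L v y w = 0 := by
          intro v y w; rw [hag L h v y w]; ring
        refine le_of_eq ?_
        refine Finset.sum_eq_zero fun y _ => Finset.sum_eq_zero fun v _ => ?_
        simp [this]
      · rw [if_neg h, hTL]
    -- main calc
    calc ∑ y, ∑ u : Fin (N + 1) → U, |jointP (N + 1) pY qC y u - jointP (N + 1) pY pC y u|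
        = ∑ y, ∑ v : Fin N → U, ∑ w : U,
            |jointP N pY qC' y v * qC L v y w - jointP N pY pC' y v * pC L v y w| := by
          refine Finset.sum_congr rfl fun y _ => ?_
          rw [hsum]
          exact Finset.sum_congr rfl fun v _ => Finset.sum_congr rfl fun w _ => by
            rw [hprod qC y v w, hprod pC y v w]
      _ ≤ ∑ y, ∑ v : Fin N → U, (|jointP N pY qC' y v - jointP N pY pC' y v|
            + jointP N pY pC' y v * ∑ w, |qC L v y w - pC L v y w|) :=
          Finset.sum_le_sum fun y _ => Finset.sum_le_sum fun v _ => key y v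
      _ = (∑ y, ∑ v : Fin N → U, |jointP N pY qC' y v - jointP N pY pC' y v|)
            + ∑ y, ∑ v : Fin N → U,
              jointP N pY pC' y v * ∑ w, |qC L v y w - pC L v y w| := by
          rw [← Finset.sum_add_distrib]
          exact Finset.sum_congr rfl fun y _ => Finset.sum_add_distrib
      _ ≤ (∑ j ∈ A'ᶜ, termT N pY pC' qC' j)
            + (if L ∈ A then 0 else termT (N + 1) pY pC qC L) := add_le_add hIH hlast
      _ = ∑ i ∈ Aᶜ, termT (N + 1) pY pC qC i := hsplit.symm

/-- if the conditional kernels of `P` and `Q` agree for all indices in `A`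
(and the `Y`-marginals agree), then twice the total variation between the joint
distributions is bounded by the sum over `i ∉ A` of the `P`-expected total variation
between the conditional laws of `Uⁱ` given `(U^{1:i-1}, Y)`. -/
theorem tv_chain_rule_agree_bound
    {U Y : Type*} [Fintype U] [Fintype Y] (N : ℕ)
    (pY : Y → ℝ)
    (pC qC : (i : Fin N) → (Fin i → U) → Y → U → ℝ)
    (A : Finset (Fin N))
    (hpY_nonneg : ∀ y, 0 ≤ pY y) (hpY_sum : ∑ y, pY y = 1)
    (hpC_nonneg : ∀ i v y w, 0 ≤ pC i v y w)
    (hpC_sum : ∀ i v y, ∑ w, pC i v y w = 1)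
    (hqC_nonneg : ∀ i v y w, 0 ≤ qC i v y w)
    (hqC_sum : ∀ i v y, ∑ w, qC i v y w = 1)
    (hagree : ∀ i ∈ A, ∀ v y w, qC i v y w = pC i v y w) :
    ∑ y, ∑ u : Fin N → U,
        |pY y * ∏ i, qC i (fun k => u (Fin.castLE i.2.le k)) y (u i)
          - pY y * ∏ i, pC i (fun k => u (Fin.castLE i.2.le k)) y (u i)|
      ≤ ∑ i ∈ Aᶜ, ∑ y, ∑ v : Fin i → U,
          (pY y * ∏ j : Fin i, pC (Fin.castLE i.2.le j)
              (fun k => v (Fin.castLE j.2.le k)) y (v j))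
            * ∑ w : U, |qC i v y w - pC i v y w| := by
  exact tv_aux N pY pC qC A hpY_nonneg hpC_nonneg hpC_sum hqC_nonneg hqC_sum hagree
end
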